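/- Let G ∈ H₃ with |X| ≥ 2. Then χ(G) = |X| + 1, witnessed by a coloring assigning distinct colors to X ∪ {v₁}, with v₄ colored like v₁, v₂ and v₆ colored like some x ∈ X, and v₃ and v₅ colored like some other x' ∈ X. -/

import Mathlib

open SimpleGraph

/-- A proper coloring of `G` with colors in `Fin ℓ`. -/
def IsProperColoring {V : Type*} (G : SimpleGraph V) (ℓ : ℕ) (f : V → Fin ℓ) : Prop :=
  ∀ ⦃a b : V⦄, G.Adj a b → f a ≠ f b

/-- A walk in the reconfiguration graph `R_ℓ(G)`: a sequence `c 0, c 1, …, c m` of proper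
`ℓ`-colorings of `G` in which consecutive colorings differ on at most one vertex. -/
def IsRecolorSeq {V : Type*} (G : SimpleGraph V) (ℓ m : ℕ) (c : ℕ → V → Fin ℓ) : Prop :=
  (∀ i ≤ m, IsProperColoring G ℓ (c i)) ∧
    ∀ i < m, ∀ a b : V, a ≠ b → c i a ≠ c (i + 1) a → c i b = c (i + 1) b

/-- The number of times the vertex `a` is recolored along the sequence `c 0, …, c m`. -/
def recolorCount {V : Type*} {ℓ : ℕ} (m : ℕ) (c : ℕ → V → Fin ℓ) (a : V) : ℕ :=
  ((Finset.range m).filter fun i => c i a ≠ c (i + 1) a).card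

/-- The cycle `Cₙ` on `Fin n` (for `n ≥ 3`). -/
def cyc (n : ℕ) [NeZero n] : SimpleGraph (Fin n) := SimpleGraph.fromRel fun a b => a + 1 = b

/-- The graph `P₂ + P₃`, the disjoint union of an edge and a path on three vertices. -/
def p2p3 : SimpleGraph (Fin 5) := SimpleGraph.fromRel fun a b =>
  (a = 0 ∧ b = 1) ∨ (a = 2 ∧ b = 3) ∨ (a = 3 ∧ b = 4)

/-- Adjacency in the 6-cycle on `Fin 6` (indices mod 6). -/
def c6adj (i j : Fin 6) : Prop := i + 1 = j ∨ j + 1 = i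

/-- The class `H₃`: six vertices `v 0, …, v 5` inducing a 6-cycle together with a nonempty
clique `X` complete to `{v 0, v 3}` (i.e. `{v₁, v₄}`), and no other edges. -/
structure H3Data {V : Type*} (G : SimpleGraph V) where
  v : Fin 6 → V
  X : Finset V
  inj : Function.Injective v
  notin : ∀ i, v i ∉ X
  Xne : X.Nonempty
  cover : ∀ x : V, x ∈ X ∨ ∃ i, x = v i
  adj_iff : ∀ x y : V, G.Adj x y ↔ x ≠ y ∧
    ((x ∈ X ∧ y ∈ X) ∨
     (∃ i j : Fin 6, x = v i ∧ y = v j ∧ c6adj i j) ∨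
     (x ∈ X ∧ (y = v 0 ∨ y = v 3)) ∨
     (y ∈ X ∧ (x = v 0 ∨ x = v 3)))

/-!
`X ∪ {v₁}` is a clique, so `χ(G) ≥ |X| + 1`. Conversely, give `X` the colours `0, …, |X| - 1`
and `v₁, v₄` the new colour `|X|`; the remaining vertices `v₂, v₃, v₅, v₆` of the 6-cycle have no
neighbours in `X`, so the 3-colouring `v₁ v₂ v₃ v₄ v₅ v₆ ↦ 0 1 2 0 2 1` of the 6-cycle can use
the new colour together with the colours of any two distinct `x, x' ∈ X`.
-/

theorem SimpleGraph.chromaticNumber_eq_of_isClique_of_isProperColoring {V : Type*}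
    {G : SimpleGraph V} {s : Finset V} {n : ℕ} (hs : G.IsClique (s : Set V)) (hcard : s.card = n)
    (f : V → Fin n) (hf : IsProperColoring G n f) : G.chromaticNumber = n := by
  refine le_antisymm ?_ (hcard ▸ hs.card_le_chromaticNumber)
  simpa using (Coloring.mk f fun hab => hf hab).colorable.chromaticNumber_le

def c6pattern : Fin 6 → Fin 3 := ![0, 1, 2, 0, 2, 1]

theorem c6pattern_ne_of_c6adj : ∀ i j : Fin 6, c6adj i j → c6pattern i ≠ c6pattern j := by
  unfold c6adj
  decide

namespace H3Data

variable {V : Type*} {G : SimpleGraph V} (h : H3Data G)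

open Classical in
theorem isClique_insert_v_zero : G.IsClique (insert (h.v 0) h.X : Finset V) := by
  intro x hx y hy hxy
  simp only [Finset.coe_insert, Set.mem_insert_iff, Finset.mem_coe] at hx hy
  rw [h.adj_iff]
  refine ⟨hxy, ?_⟩
  rcases hx with rfl | hx <;> rcases hy with rfl | hy
  · exact absurd rfl hxy
  · exact Or.inr (Or.inr (Or.inr ⟨hy, Or.inl rfl⟩))
  · exact Or.inr (Or.inr (Or.inl ⟨hx, Or.inl rfl⟩))
  · exact Or.inl ⟨hx, hy⟩

open Classical in
theorem card_insert_v_zero : (insert (h.v 0) h.X).card = h.X.card + 1 :=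
  Finset.card_insert_of_notMem (h.notin 0)

noncomputable def cliqueColor (x : h.X) : Fin (h.X.card + 1) :=
  (h.X.equivFin x).castSucc

theorem cliqueColor_injective : Function.Injective h.cliqueColor :=
  (Fin.castSucc_injective _).comp h.X.equivFin.injective

theorem cliqueColor_ne_last (x : h.X) : h.cliqueColor x ≠ Fin.last _ :=
  (Fin.castSucc_lt_last _).ne

noncomputable def cycleColor (a b : h.X) : Fin 3 → Fin (h.X.card + 1) :=
  ![Fin.last _, h.cliqueColor a, h.cliqueColor b]

theorem cycleColor_injective {a b : h.X} (hab : a ≠ b) :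
    Function.Injective (h.cycleColor a b) := by
  have hne := h.cliqueColor_injective.ne hab
  have ha := h.cliqueColor_ne_last a
  have hb := h.cliqueColor_ne_last b
  intro i j hij
  fin_cases i <;> fin_cases j <;> simp_all [cycleColor, eq_comm]

open Classical in
noncomputable def coloring (a b : h.X) (x : V) : Fin (h.X.card + 1) :=
  if hx : x ∈ h.X then h.cliqueColor ⟨x, hx⟩
  else h.cycleColor a b (c6pattern (Function.invFun h.v x))

theorem coloring_of_mem (a b : h.X) {x : V} (hx : x ∈ h.X) :
    h.coloring a b x = h.cliqueColor ⟨x, hx⟩ := by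
  rw [coloring, dif_pos hx]

theorem coloring_v (a b : h.X) (i : Fin 6) :
    h.coloring a b (h.v i) = h.cycleColor a b (c6pattern i) := by
  rw [coloring, dif_neg (h.notin i), Function.leftInverse_invFun h.inj i]

theorem coloring_v_zero (a b : h.X) : h.coloring a b (h.v 0) = Fin.last _ :=
  h.coloring_v a b 0

theorem coloring_v_three (a b : h.X) : h.coloring a b (h.v 3) = Fin.last _ :=
  h.coloring_v a b 3

theorem coloring_ne_last_of_mem (a b : h.X) {x : V} (hx : x ∈ h.X) :
    h.coloring a b x ≠ Fin.last _ := by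
  rw [h.coloring_of_mem a b hx]
  exact h.cliqueColor_ne_last _

theorem isProperColoring_coloring {a b : h.X} (hab : a ≠ b) :
    IsProperColoring G (h.X.card + 1) (h.coloring a b) := by
  intro x y hxy
  obtain ⟨hne, hX | ⟨i, j, rfl, rfl, hij⟩ | ⟨hx, hy⟩ | ⟨hy, hx⟩⟩ := (h.adj_iff x y).mp hxy
  · rw [h.coloring_of_mem a b hX.1, h.coloring_of_mem a b hX.2]
    exact h.cliqueColor_injective.ne (by simpa using hne)
  · rw [h.coloring_v, h.coloring_v]
    exact (h.cycleColor_injective hab).ne (c6pattern_ne_of_c6adj i j hij)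
  · rcases hy with rfl | rfl
    · rw [h.coloring_v_zero]; exact h.coloring_ne_last_of_mem a b hx
    · rw [h.coloring_v_three]; exact h.coloring_ne_last_of_mem a b hx
  · rcases hx with rfl | rfl
    · rw [h.coloring_v_zero]; exact (h.coloring_ne_last_of_mem a b hy).symm
    · rw [h.coloring_v_three]; exact (h.coloring_ne_last_of_mem a b hy).symm

theorem injOn_coloring (a b : h.X) : Set.InjOn (h.coloring a b) (↑h.X ∪ {h.v 0}) := by
  rintro x (hx | rfl) y (hy | rfl) hxy
  · rw [h.coloring_of_mem a b hx, h.coloring_of_mem a b hy] at hxy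
    simpa using h.cliqueColor_injective hxy
  · exact absurd (hxy.trans (h.coloring_v_zero a b)) (h.coloring_ne_last_of_mem a b hx)
  · exact absurd (hxy.symm.trans (h.coloring_v_zero a b)) (h.coloring_ne_last_of_mem a b hy)
  · rfl

end H3Data

theorem stmt11_general {V : Type*} {G : SimpleGraph V} (h : H3Data G)
    (h2 : 2 ≤ h.X.card) :
    G.chromaticNumber = ((h.X.card + 1 : ℕ) : ℕ∞) ∧
    ∃ c : V → Fin (h.X.card + 1), IsProperColoring G (h.X.card + 1) c ∧
      Set.InjOn c (↑h.X ∪ {h.v 0}) ∧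
      c (h.v 3) = c (h.v 0) ∧
      ∃ x ∈ h.X, ∃ x' ∈ h.X, x ≠ x' ∧
        c (h.v 1) = c x ∧ c (h.v 5) = c x ∧ c (h.v 2) = c x' ∧ c (h.v 4) = c x' := by
  classical
  obtain ⟨a, ha, b, hb, hab⟩ := Finset.one_lt_card.mp h2
  have hab' : (⟨a, ha⟩ : h.X) ≠ ⟨b, hb⟩ := fun e => hab (congrArg Subtype.val e)
  have hproper := h.isProperColoring_coloring hab'
  refine ⟨chromaticNumber_eq_of_isClique_of_isProperColoring h.isClique_insert_v_zero
    h.card_insert_v_zero _ hproper, _, hproper, h.injOn_coloring _ _, ?_, a, ha, b, hb, hab, ?_⟩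
  · rw [h.coloring_v_zero, h.coloring_v_three]
  · simp only [h.coloring_v, h.coloring_of_mem _ _ ha, h.coloring_of_mem _ _ hb]
    exact ⟨rfl, rfl, rfl, rfl⟩

/-- for `G ∈ H₃` with `|X| ≥ 2`, `χ(G) = |X| + 1`, witnessed by a proper
coloring assigning distinct colors to `X ∪ {v₁}`, coloring `v₄` like `v₁`, `v₂, v₆` like
some `x ∈ X` and `v₃, v₅` like some other `x' ∈ X`. -/
theorem stmt11 {V : Type*} [Fintype V] {G : SimpleGraph V} (h : H3Data G)
    (h2 : 2 ≤ h.X.card) :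
    G.chromaticNumber = ((h.X.card + 1 : ℕ) : ℕ∞) ∧
    ∃ c : V → Fin (h.X.card + 1), IsProperColoring G (h.X.card + 1) c ∧
      Set.InjOn c (↑h.X ∪ {h.v 0}) ∧
      c (h.v 3) = c (h.v 0) ∧
      ∃ x ∈ h.X, ∃ x' ∈ h.X, x ≠ x' ∧
        c (h.v 1) = c x ∧ c (h.v 5) = c x ∧ c (h.v 2) = c x' ∧ c (h.v 4) = c x' :=
  stmt11_general h h2
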